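/- Let A and B be nearly simple algebras over a field F, with unique non-trivial ideals I_A and I_B. Assume that: (i) every nonzero two-sided ideal of A ⊗ B contains a nonzero elementary tensor; (ii) every nonzero two-sided ideal of (A/I_A) ⊗ B contains a nonzero elementary tensor; (iii) every nonzero two-sided ideal of A ⊗ (B/I_B) contains a nonzero elementary tensor; and (iv) Z(A/I_A) ⊗ Z(B/I_B) is a field. Then every two-sided ideal of A ⊗ B is admissible. -/

import Mathlib

open TensorProduct

/-- `A` is nearly simple with unique non-trivial two-sided ideal `I`. -/
def IsNearlySimpleWith {A : Type*} [Ring A] (I : TwoSidedIdeal A) : Prop :=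
  I ≠ ⊥ ∧ I ≠ ⊤ ∧
    (∀ J : TwoSidedIdeal A, J ≠ ⊥ → J ≠ ⊤ → J = I) ∧
    (∃ x ∈ I, ∃ y ∈ I, x * y ≠ 0)

/-- The `F`-subspace of `A ⊗[F] B` spanned by elementary tensors `x ⊗ y` with `x ∈ S`
and `y ∈ T`. -/
def tmulSpan (F : Type*) {A B : Type*} [Field F] [Ring A] [Algebra F A] [Ring B]
    [Algebra F B] (S : Set A) (T : Set B) : Submodule F (A ⊗[F] B) :=
  Submodule.span F {t : A ⊗[F] B | ∃ x ∈ S, ∃ y ∈ T, t = x ⊗ₜ[F] y}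

/-- A two-sided ideal of `A ⊗[F] B` is admissible if it is `{0}`, `A ⊗ B`, `I_A ⊗ I_B`,
`I_A ⊗ B`, `A ⊗ I_B`, or `I_A ⊗ B + A ⊗ I_B`. -/
def Admissible (F : Type*) {A B : Type*} [Field F] [Ring A] [Algebra F A] [Ring B]
    [Algebra F B] (IA : TwoSidedIdeal A) (IB : TwoSidedIdeal B)
    (J : TwoSidedIdeal (A ⊗[F] B)) : Prop :=
  J = ⊥ ∨ J = ⊤ ∨
  (J : Set (A ⊗[F] B)) = ↑(tmulSpan F (IA : Set A) (IB : Set B)) ∨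
  (J : Set (A ⊗[F] B)) = ↑(tmulSpan F (IA : Set A) (Set.univ : Set B)) ∨
  (J : Set (A ⊗[F] B)) = ↑(tmulSpan F (Set.univ : Set A) (IB : Set B)) ∨
  (J : Set (A ⊗[F] B)) =
    ↑(tmulSpan F (IA : Set A) (Set.univ : Set B) ⊔ tmulSpan F (Set.univ : Set A) (IB : Set B))

/-!
The quotients `A' = A/I_A` and `B' = B/I_B` are simple, and so is `A' ⊗ B'`: in a nonzero ideal of
`R ⊗ S` with `R` simple, an element with the fewest coefficients over a basis of `S` can be
normalised to have central coefficients; doing this on both sides lands in the field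
`Z(A') ⊗ Z(B')`, hence on a unit.

Let `J ≠ 0` be an ideal of `A ⊗ B`. A nonzero elementary tensor in `J` gives `I_A ⊗ I_B ⊆ J`. If the
image of `J` in `A ⊗ B'` is nonzero, then `I_A ⊗ B ⊆ J` (using `I_A² ≠ 0`), and symmetrically. Over
a field the kernels of `A ⊗ B → A' ⊗ B`, `A ⊗ B → A ⊗ B'` and of both are `I_A ⊗ B`, `A ⊗ I_B` and
`I_A ⊗ I_B`, and the kernel of `A ⊗ B → A' ⊗ B'` is `I_A ⊗ B + A ⊗ I_B`; according to whether `J`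
dies in `A' ⊗ B` and in `A ⊗ B'` this pins `J` down, the last case by simplicity of `A' ⊗ B'`.
-/

namespace TwoSidedIdeal

variable {R S : Type*} [Ring R] [Ring S]

lemma ne_bot_of_mem {I : TwoSidedIdeal R} {x : R} (hx : x ∈ I) (hx0 : x ≠ 0) : I ≠ ⊥ := by
  rintro rfl
  exact hx0 hx

lemma exists_mem_ne_zero_of_ne_bot {I : TwoSidedIdeal R} (hI : I ≠ ⊥) : ∃ x ∈ I, x ≠ 0 := by
  by_contra! h
  exact hI (eq_bot_iff.2 fun x hx => h x hx)

lemma mem_map_iff_of_surjective {f : R →+* S} (hf : Function.Surjective f)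
    {I : TwoSidedIdeal R} {y : S} : y ∈ I.map f ↔ ∃ x ∈ I, f x = y := by
  refine ⟨fun hy => ?_, fun ⟨x, hx, hxy⟩ => subset_span ⟨x, hx, hxy⟩⟩
  induction hy using span_induction with
  | mem _ h => exact h
  | zero => exact ⟨0, I.zero_mem, map_zero f⟩
  | add _ _ _ _ h₁ h₂ =>
    obtain ⟨x₁, hx₁, rfl⟩ := h₁
    obtain ⟨x₂, hx₂, rfl⟩ := h₂
    exact ⟨x₁ + x₂, I.add_mem hx₁ hx₂, map_add f _ _⟩
  | neg _ _ h =>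
    obtain ⟨x, hx, rfl⟩ := h
    exact ⟨-x, I.neg_mem hx, map_neg f _⟩
  | left_absorb a _ _ h =>
    obtain ⟨x, hx, rfl⟩ := h
    obtain ⟨a, rfl⟩ := hf a
    exact ⟨a * x, I.mul_mem_left _ _ hx, map_mul f _ _⟩
  | right_absorb b _ _ h =>
    obtain ⟨x, hx, rfl⟩ := h
    obtain ⟨b, rfl⟩ := hf b
    exact ⟨x * b, I.mul_mem_right _ _ hx, map_mul f _ _⟩

lemma map_ne_bot_of_not_le_ker {f : R →+* S} {I : TwoSidedIdeal R} (h : ¬I ≤ ker f) :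
    I.map f ≠ ⊥ := by
  obtain ⟨x, hx, hfx⟩ := SetLike.not_le_iff_exists.1 h
  exact ne_bot_of_mem (subset_span ⟨x, hx, rfl⟩) (mt (mem_ker f).2 hfx)

lemma eq_ker_or_eq_top_of_ker_le [IsSimpleRing S] {f : R →+* S} (hf : Function.Surjective f)
    {I : TwoSidedIdeal R} (hI : ker f ≤ I) : I = ker f ∨ I = ⊤ := by
  by_cases hle : I ≤ ker f
  · exact Or.inl (le_antisymm hle hI)
  right
  obtain ⟨x, hx, hfx⟩ := (mem_map_iff_of_surjective hf).1
    (IsSimpleRing.one_mem_of_ne_bot _ (map_ne_bot_of_not_le_ker hle))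
  have h1x : 1 - x ∈ I := hI ((mem_ker f).2 (by rw [map_sub, map_one, hfx, sub_self]))
  exact (one_mem_iff I).1 (by simpa using I.add_mem h1x hx)

end TwoSidedIdeal

namespace IsNearlySimpleWith

variable {A A' : Type*} [Ring A] [Ring A'] {I : TwoSidedIdeal A}

lemma le_of_ne_bot (h : IsNearlySimpleWith I) {K : TwoSidedIdeal A} (hK : K ≠ ⊥) : I ≤ K := by
  rcases eq_or_ne K ⊤ with rfl | hK'
  · exact le_top
  · exact (h.2.2.1 K hK hK').ge

lemma isSimpleRing_of_surjective (h : IsNearlySimpleWith I) {f : A →+* A'}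
    (hf : Function.Surjective f) (hker : ∀ x, f x = 0 ↔ x ∈ I) : IsSimpleRing A' := by
  have : Nontrivial A' :=
    ⟨⟨1, 0, fun h1 => h.2.1 (I.one_mem_iff.1 ((hker 1).1 (by simpa using h1)))⟩⟩
  refine .of_eq_bot_or_eq_top fun K => or_iff_not_imp_left.2 fun hK => ?_
  obtain ⟨y, hyK, hy0⟩ := TwoSidedIdeal.exists_mem_ne_zero_of_ne_bot hK
  obtain ⟨x, rfl⟩ := hf y
  have hIK : I ≤ K.comap f := fun z hz => by
    simp [TwoSidedIdeal.mem_comap, (hker z).2 hz, K.zero_mem]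
  have hcomap : K.comap f = ⊤ := by
    by_contra hne
    have hxI : x ∈ I :=
      h.2.2.1 _ (ne_bot_of_le_ne_bot h.1 hIK) hne ▸ (TwoSidedIdeal.mem_comap f).2 hyK
    exact hy0 ((hker x).2 hxI)
  have h1 : (1 : A) ∈ K.comap f := hcomap ▸ trivial
  exact K.one_mem_iff.1 (by simpa [TwoSidedIdeal.mem_comap] using h1)

end IsNearlySimpleWith

section Slices

variable {R A B : Type*} [CommRing R] [Ring A] [Algebra R A] [Ring B] [Algebra R B]

def leftSlice (J : TwoSidedIdeal (A ⊗[R] B)) (y : B) : TwoSidedIdeal A :=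
  .mk' {x | x ⊗ₜ y ∈ J} (by simp [J.zero_mem])
    (fun hx hy => by simpa [add_tmul] using J.add_mem hx hy)
    (fun hx => by simpa [neg_tmul] using J.neg_mem hx)
    (fun {a _} hx => by
      simpa using J.mul_mem_left (a ⊗ₜ 1) _ hx)
    (fun {_ b} hx => by
      simpa using J.mul_mem_right _ (b ⊗ₜ 1) hx)

def rightSlice (J : TwoSidedIdeal (A ⊗[R] B)) (x : A) : TwoSidedIdeal B :=
  .mk' {y | x ⊗ₜ y ∈ J} (by simp [J.zero_mem])
    (fun hx hy => by simpa [tmul_add] using J.add_mem hx hy)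
    (fun hx => by simpa [tmul_neg] using J.neg_mem hx)
    (fun {a _} hx => by
      simpa using J.mul_mem_left (1 ⊗ₜ a) _ hx)
    (fun {_ b} hx => by
      simpa using J.mul_mem_right _ (1 ⊗ₜ b) hx)

variable {J : TwoSidedIdeal (A ⊗[R] B)}

@[simp]
lemma mem_leftSlice {x : A} {y : B} : x ∈ leftSlice J y ↔ x ⊗ₜ y ∈ J :=
  TwoSidedIdeal.mem_mk' ..

@[simp]
lemma mem_rightSlice {x : A} {y : B} : y ∈ rightSlice J x ↔ x ⊗ₜ y ∈ J :=
  TwoSidedIdeal.mem_mk' ..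

lemma IsNearlySimpleWith.tmul_mem_of_tmul_mem_left {I : TwoSidedIdeal A}
    (hI : IsNearlySimpleWith I) {a x : A} {y : B} (h : a ⊗ₜ y ∈ J) (ha : a ≠ 0) (hx : x ∈ I) :
    x ⊗ₜ y ∈ J :=
  mem_leftSlice.1 (hI.le_of_ne_bot (TwoSidedIdeal.ne_bot_of_mem (mem_leftSlice.2 h) ha) hx)

lemma IsNearlySimpleWith.tmul_mem_of_tmul_mem_right {I : TwoSidedIdeal B}
    (hI : IsNearlySimpleWith I) {x : A} {b y : B} (h : x ⊗ₜ b ∈ J) (hb : b ≠ 0) (hy : y ∈ I) :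
    x ⊗ₜ y ∈ J :=
  mem_rightSlice.1 (hI.le_of_ne_bot (TwoSidedIdeal.ne_bot_of_mem (mem_rightSlice.2 h) hb) hy)

lemma one_tmul_mem_of_tmul_mem [IsSimpleRing A] {a : A} {y : B} (h : a ⊗ₜ y ∈ J)
    (ha : a ≠ 0) : 1 ⊗ₜ y ∈ J :=
  mem_leftSlice.1 (IsSimpleRing.one_mem_of_ne_zero_mem _ ha (mem_leftSlice.2 h))

lemma tmul_one_mem_of_tmul_mem [IsSimpleRing B] {x : A} {b : B} (h : x ⊗ₜ b ∈ J)
    (hb : b ≠ 0) : x ⊗ₜ 1 ∈ J :=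
  mem_rightSlice.1 (IsSimpleRing.one_mem_of_ne_zero_mem _ hb (mem_rightSlice.2 h))

end Slices

section TmulSpan

variable {F A B : Type*} [Field F] [Ring A] [Algebra F A] [Ring B] [Algebra F B]

lemma tmul_mem_tmulSpan {S : Set A} {T : Set B} {x : A} {y : B} (hx : x ∈ S) (hy : y ∈ T) :
    x ⊗ₜ[F] y ∈ tmulSpan F S T :=
  Submodule.subset_span ⟨x, hx, y, hy, rfl⟩

lemma tmulSpan_mono {S S' : Set A} {T T' : Set B} (hS : S ⊆ S') (hT : T ⊆ T') :
    tmulSpan F S T ≤ tmulSpan F S' T' :=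
  Submodule.span_mono fun _ ⟨x, hx, y, hy, h⟩ => ⟨x, hS hx, y, hT hy, h⟩

lemma coe_tmulSpan_subset_iff {S : Set A} {T : Set B} {J : TwoSidedIdeal (A ⊗[F] B)} :
    (tmulSpan F S T : Set (A ⊗[F] B)) ⊆ J ↔ ∀ x ∈ S, ∀ y ∈ T, x ⊗ₜ[F] y ∈ J := by
  refine ⟨fun h x hx y hy => h (tmul_mem_tmulSpan hx hy), fun h => ?_⟩
  have : tmulSpan F S T ≤ J.asIdeal.restrictScalars F :=
    Submodule.span_le.2 fun _ ⟨x, hx, y, hy, hxy⟩ => hxy ▸ h x hx y hy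
  exact this

lemma tmul_one_mul_mem {I : TwoSidedIdeal A} {T : Set B} {J : TwoSidedIdeal (A ⊗[F] B)}
    (hJ : (tmulSpan F (I : Set A) T : Set (A ⊗[F] B)) ⊆ J) {x : A} (hx : x ∈ I) {u : A ⊗[F] B}
    (hu : u ∈ tmulSpan F Set.univ T) : (x ⊗ₜ 1) * u ∈ J := by
  have : tmulSpan F Set.univ T ≤
      (J.asIdeal.restrictScalars F).comap (LinearMap.mulLeft F (x ⊗ₜ[F] (1 : B))) :=
    Submodule.span_le.2 fun _ ⟨a, _, y, hy, h⟩ =>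
      h ▸ hJ (by simpa using tmul_mem_tmulSpan (F := F) (I.mul_mem_right x a hx) hy)
  exact this hu

lemma one_tmul_mul_mem {I : TwoSidedIdeal B} {S : Set A} {J : TwoSidedIdeal (A ⊗[F] B)}
    (hJ : (tmulSpan F S (I : Set B) : Set (A ⊗[F] B)) ⊆ J) {y : B} (hy : y ∈ I) {u : A ⊗[F] B}
    (hu : u ∈ tmulSpan F S Set.univ) : (1 ⊗ₜ y) * u ∈ J := by
  have : tmulSpan F S Set.univ ≤
      (J.asIdeal.restrictScalars F).comap (LinearMap.mulLeft F ((1 : A) ⊗ₜ[F] y)) :=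
    Submodule.span_le.2 fun _ ⟨x, hx, b, _, h⟩ =>
      h ▸ hJ (by simpa using tmul_mem_tmulSpan (F := F) hx (I.mul_mem_right y b hy))
  exact this hu

variable {M N : Type*} [AddCommGroup M] [Module F M] [AddCommGroup N] [Module F N]

lemma range_map_eq_tmulSpan (f : M →ₗ[F] A) (g : N →ₗ[F] B) :
    LinearMap.range (TensorProduct.map f g) =
      tmulSpan F (LinearMap.range f) (LinearMap.range g) := by
  rw [TensorProduct.range_map_eq_span_tmul, tmulSpan]
  congr 1
  ext t
  simp [eq_comm]

lemma ker_rTensor_eq_tmulSpan (f : A →ₗ[F] M) :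
    LinearMap.ker (f.rTensor B) = tmulSpan F (LinearMap.ker f) Set.univ := by
  rw [(Module.Flat.rTensor_exact B (LinearMap.exact_subtype_ker_map f)).linearMap_ker_eq,
    LinearMap.rTensor, range_map_eq_tmulSpan, Submodule.range_subtype, LinearMap.range_id,
    Submodule.top_coe]

lemma ker_lTensor_eq_tmulSpan (g : B →ₗ[F] N) :
    LinearMap.ker (g.lTensor A) = tmulSpan F Set.univ (LinearMap.ker g) := by
  rw [(Module.Flat.lTensor_exact A (LinearMap.exact_subtype_ker_map g)).linearMap_ker_eq,
    LinearMap.lTensor, range_map_eq_tmulSpan, Submodule.range_subtype, LinearMap.range_id,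
    Submodule.top_coe]

lemma ker_rTensor_inf_ker_lTensor_eq_tmulSpan (f : A →ₗ[F] M) (g : B →ₗ[F] N) :
    LinearMap.ker (f.rTensor B) ⊓ LinearMap.ker (g.lTensor A) =
      tmulSpan F (LinearMap.ker f) (LinearMap.ker g) := by
  apply le_antisymm ?_ (le_inf ?_ ?_)
  · rintro u ⟨hfu, hgu⟩
    obtain ⟨w, rfl⟩ : u ∈ LinearMap.range ((LinearMap.ker g).subtype.lTensor A) :=
      (Module.Flat.lTensor_exact A (LinearMap.exact_subtype_ker_map g)).linearMap_ker_eq ▸ hgu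
    have hw : w ∈ LinearMap.ker (f.rTensor (LinearMap.ker g)) := by
      refine Module.Flat.lTensor_preserves_injective_linearMap (M := M) (LinearMap.ker g).subtype
        Subtype.val_injective ?_
      rw [map_zero, ← LinearMap.comp_apply, LinearMap.lTensor_comp_rTensor,
        ← LinearMap.rTensor_comp_lTensor]
      exact hfu
    obtain ⟨v, rfl⟩ : w ∈ LinearMap.range ((LinearMap.ker f).subtype.rTensor (LinearMap.ker g)) :=
      (Module.Flat.rTensor_exact (LinearMap.ker g)
        (LinearMap.exact_subtype_ker_map f)).linearMap_ker_eq ▸ hw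
    rw [← LinearMap.comp_apply, LinearMap.lTensor_comp_rTensor]
    have := LinearMap.mem_range_self
      (TensorProduct.map (LinearMap.ker f).subtype (LinearMap.ker g).subtype) v
    rwa [range_map_eq_tmulSpan, Submodule.range_subtype, Submodule.range_subtype] at this
  · rw [ker_rTensor_eq_tmulSpan]
    exact tmulSpan_mono le_rfl (Set.subset_univ _)
  · rw [ker_lTensor_eq_tmulSpan]
    exact tmulSpan_mono (Set.subset_univ _) le_rfl

lemma ker_map_eq_tmulSpan_sup {f : A →ₗ[F] M} {g : B →ₗ[F] N} (hf : Function.Surjective f)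
    (hg : Function.Surjective g) :
    LinearMap.ker (TensorProduct.map f g) =
      tmulSpan F (LinearMap.ker f) Set.univ ⊔ tmulSpan F Set.univ (LinearMap.ker g) := by
  rw [TensorProduct.map_ker (LinearMap.exact_subtype_ker_map f) hf
      (LinearMap.exact_subtype_ker_map g) hg, sup_comm, LinearMap.lTensor, LinearMap.rTensor,
    range_map_eq_tmulSpan, range_map_eq_tmulSpan]
  simp

end TmulSpan

section CenterTensor

open Module

variable {F R S : Type*} [Field F] [Ring R] [Algebra F R] [Ring S] [Algebra F S]

namespace Module.Basis

variable {ι : Type*} (b : Basis ι F S)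

lemma baseChange_repr_tmul_one_mul (r : R) (u : R ⊗[F] S) (i : ι) :
    (b.baseChange R).repr ((r ⊗ₜ 1) * u) i = r * (b.baseChange R).repr u i := by
  induction u with
  | zero => simp
  | tmul x y => simp [Algebra.TensorProduct.tmul_mul_tmul]
  | add u v hu hv => simp [mul_add, hu, hv]

lemma baseChange_repr_mul_tmul_one (r : R) (u : R ⊗[F] S) (i : ι) :
    (b.baseChange R).repr (u * (r ⊗ₜ 1)) i = (b.baseChange R).repr u i * r := by
  induction u with
  | zero => simp
  | tmul x y => simp [Algebra.TensorProduct.tmul_mul_tmul]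
  | add u v hu hv => simp [add_mul, hu, hv]

/-- The `i₀`-th coefficients of the elements of `K` supported inside the support of `u` form a
nonzero two-sided ideal of the simple ring `R`. -/
lemma exists_mem_baseChange_repr_eq_one [IsSimpleRing R] {K : TwoSidedIdeal (R ⊗[F] S)}
    {u : R ⊗[F] S} (hu : u ∈ K) {i₀ : ι} (hi₀ : (b.baseChange R).repr u i₀ ≠ 0) :
    ∃ v ∈ K, (b.baseChange R).repr v i₀ = 1 ∧
      ∀ i, (b.baseChange R).repr u i = 0 → (b.baseChange R).repr v i = 0 := by
  set c := (b.baseChange R).repr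
  let T : TwoSidedIdeal R := .mk' {a | ∃ v ∈ K, c v i₀ = a ∧ ∀ i, c u i = 0 → c v i = 0}
    ⟨0, K.zero_mem, by simp, by simp⟩
    (fun ⟨v, hv, hva, hvs⟩ ⟨w, hw, hwa, hws⟩ =>
      ⟨v + w, K.add_mem hv hw, by simp [hva, hwa], fun i hi => by simp [hvs i hi, hws i hi]⟩)
    (fun ⟨v, hv, hva, hvs⟩ => ⟨-v, K.neg_mem hv, by simp [hva], fun i hi => by simp [hvs i hi]⟩)
    (fun {r _} ⟨v, hv, hva, hvs⟩ => ⟨(r ⊗ₜ 1) * v, K.mul_mem_left _ _ hv,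
      by simp [c, baseChange_repr_tmul_one_mul, ← hva],
      fun i hi => by simp [c, baseChange_repr_tmul_one_mul, hvs i hi]⟩)
    (fun {_ r} ⟨v, hv, hva, hvs⟩ => ⟨v * (r ⊗ₜ 1), K.mul_mem_right _ _ hv,
      by simp [c, baseChange_repr_mul_tmul_one, ← hva],
      fun i hi => by simp [c, baseChange_repr_mul_tmul_one, hvs i hi]⟩)
  have huT : c u i₀ ∈ T := by
    simpa [T] using ⟨u, hu, rfl, fun _ h => h⟩
  simpa [T] using IsSimpleRing.one_mem_of_ne_zero_mem T hi₀ huT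

/-- Take a nonzero element of `K` with the fewest nonzero coefficients and normalise one of them
to `1`: its commutators with `R ⊗ 1` lie in `K` and have smaller support, so they vanish. -/
lemma exists_mem_ne_zero_baseChange_repr_mem_center [IsSimpleRing R]
    {K : TwoSidedIdeal (R ⊗[F] S)} (hK : K ≠ ⊥) :
    ∃ v ∈ K, v ≠ 0 ∧ ∀ i, (b.baseChange R).repr v i ∈ Subalgebra.center F R := by
  set c := (b.baseChange R).repr with hc
  obtain ⟨u, ⟨huK, hu0⟩, hmin⟩ := (measure fun v => (c v).support.card).wf.has_min
    {v | v ∈ K ∧ v ≠ 0} (TwoSidedIdeal.exists_mem_ne_zero_of_ne_bot hK)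
  obtain ⟨i₀, hi₀⟩ : ∃ i, c u i ≠ 0 := DFunLike.ne_iff.1 ((LinearEquiv.map_ne_zero_iff c).2 hu0)
  obtain ⟨v, hvK, hv1, hvu⟩ := b.exists_mem_baseChange_repr_eq_one huK hi₀
  rw [← hc] at hv1 hvu
  refine ⟨v, hvK, fun hv => by simp [hv] at hv1, fun i => Subalgebra.mem_center_iff.2 fun x => ?_⟩
  set d := (x ⊗ₜ 1) * v - v * (x ⊗ₜ 1)
  have hd : ∀ j, c d j = x * c v j - c v j * x := fun j => by
    simp [d, c, baseChange_repr_tmul_one_mul, baseChange_repr_mul_tmul_one]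
  suffices d = 0 by simpa [hd, sub_eq_zero] using congr(c $this i)
  by_contra hd0
  refine hmin d ⟨K.sub_mem (K.mul_mem_left _ _ hvK) (K.mul_mem_right _ _ hvK), hd0⟩ ?_
  refine Finset.card_lt_card ((Finset.ssubset_iff_of_subset fun j hj => ?_).2
    ⟨i₀, by simpa using hi₀, by simp [hd, hv1]⟩)
  simp only [Finsupp.mem_support_iff] at hj ⊢
  exact fun hu => hj (by simp [hd, hvu j hu])

end Module.Basis

lemma exists_ne_zero_map_center_val_mem [IsSimpleRing R] {K : TwoSidedIdeal (R ⊗[F] S)}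
    (hK : K ≠ ⊥) : ∃ w : Subalgebra.center F R ⊗[F] S, w ≠ 0 ∧
      Algebra.TensorProduct.map (Subalgebra.center F R).val (AlgHom.id F S) w ∈ K := by
  let b := Basis.ofVectorSpace F S
  obtain ⟨v, hvK, hv0, hvZ⟩ := b.exists_mem_ne_zero_baseChange_repr_mem_center hK
  obtain ⟨w, rfl⟩ : v ∈ LinearMap.range
      (Algebra.TensorProduct.map (Subalgebra.center F R).val (AlgHom.id F S)).toLinearMap := by
    rw [← (b.baseChange R).linearCombination_repr v, Finsupp.linearCombination_apply]
    exact Submodule.sum_mem _ fun i _ => ⟨⟨_, hvZ i⟩ ⊗ₜ b i, by simp [smul_tmul']⟩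
  exact ⟨w, fun hw => hv0 (by simp [hw]), hvK⟩

lemma exists_ne_zero_map_val_center_mem [IsSimpleRing S] {K : TwoSidedIdeal (R ⊗[F] S)}
    (hK : K ≠ ⊥) : ∃ w : R ⊗[F] Subalgebra.center F S, w ≠ 0 ∧
      Algebra.TensorProduct.map (AlgHom.id F R) (Subalgebra.center F S).val w ∈ K := by
  let e := Algebra.TensorProduct.comm F S R
  obtain ⟨x, hxK, hx0⟩ := TwoSidedIdeal.exists_mem_ne_zero_of_ne_bot hK
  have hK' : K.comap e ≠ ⊥ := TwoSidedIdeal.ne_bot_of_mem (x := e.symm x)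
    (by simpa [TwoSidedIdeal.mem_comap] using hxK) (by simpa using hx0)
  have he : ∀ w, Algebra.TensorProduct.map (AlgHom.id F R) (Subalgebra.center F S).val
      (Algebra.TensorProduct.comm F _ _ w) =
        e (Algebra.TensorProduct.map (Subalgebra.center F S).val (AlgHom.id F R) w) := fun w => by
    induction w with
    | zero => simp
    | tmul z r => rfl
    | add w w' h h' => simp only [map_add, h, h']
  obtain ⟨w, hw0, hwK⟩ := exists_ne_zero_map_center_val_mem hK'
  exact ⟨Algebra.TensorProduct.comm F _ _ w, by simpa using hw0,
    he w ▸ (TwoSidedIdeal.mem_comap _).1 hwK⟩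

theorem isSimpleRing_tensorProduct [IsSimpleRing R] [IsSimpleRing S]
    (h : IsField (Subalgebra.center F R ⊗[F] Subalgebra.center F S)) :
    IsSimpleRing (R ⊗[F] S) := by
  refine .of_eq_bot_or_eq_top fun K => or_iff_not_imp_left.2 fun hK => ?_
  obtain ⟨w₁, hw₁0, hw₁K⟩ := exists_ne_zero_map_center_val_mem hK
  let ι₁ := Algebra.TensorProduct.map (Subalgebra.center F R).val (AlgHom.id F S)
  let ι₂ :=
    Algebra.TensorProduct.map (AlgHom.id F (Subalgebra.center F R)) (Subalgebra.center F S).val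
  obtain ⟨w₂, hw₂0, hw₂K⟩ := exists_ne_zero_map_val_center_mem
    (TwoSidedIdeal.ne_bot_of_mem (I := K.comap ι₁) ((TwoSidedIdeal.mem_comap _).2 hw₁K) hw₁0)
  obtain ⟨t, ht⟩ := h.mul_inv_cancel hw₂0
  have h1 : ι₁ (ι₂ (w₂ * t)) ∈ K := by
    rw [map_mul, map_mul]
    exact K.mul_mem_right _ _ ((TwoSidedIdeal.mem_comap ι₁).1 hw₂K)
  exact K.one_mem_iff.1 (by simpa [ht] using h1)

end CenterTensor

section NearlySimple

variable {F A B A' B' : Type*} [Field F] [Ring A] [Algebra F A] [Ring B] [Algebra F B]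
  [Ring A'] [Algebra F A'] [Ring B'] [Algebra F B']
  {IA : TwoSidedIdeal A} {IB : TwoSidedIdeal B} {J : TwoSidedIdeal (A ⊗[F] B)}

lemma coe_tmulSpan_subset_of_tmul_mem (hA : IsNearlySimpleWith IA)
    (hB : IsNearlySimpleWith IB) {a : A} {b : B} (h : a ⊗ₜ[F] b ∈ J) (hab : a ⊗ₜ[F] b ≠ 0) :
    (tmulSpan F (IA : Set A) (IB : Set B) : Set (A ⊗[F] B)) ⊆ J :=
  coe_tmulSpan_subset_iff.2 fun _ hx _ hy =>
    hA.tmul_mem_of_tmul_mem_left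
      (hB.tmul_mem_of_tmul_mem_right h (fun hb => hab (by simp [hb])) hy)
      (fun ha => hab (by simp [ha])) hx

/-- `J` survives in `A ⊗ B'`, so `I_A ⊗ 1 ⊆ J + A ⊗ I_B`; multiplying by `I_A ⊗ 1` and using
`I_A ⊗ I_B ⊆ J` puts `I_A² ⊗ 1 ≠ 0` inside `J`. -/
lemma coe_tmulSpan_ideal_univ_subset (hA : IsNearlySimpleWith IA) [IsSimpleRing B']
    {qB : B →ₐ[F] B'} (hqB : Function.Surjective qB) (hkerB : ∀ y, qB y = 0 ↔ y ∈ IB)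
    (h3 : ∀ K : TwoSidedIdeal (A ⊗[F] B'), K ≠ ⊥ →
      ∃ (a : A) (b : B'), a ⊗ₜ[F] b ∈ K ∧ a ⊗ₜ[F] b ≠ 0)
    (hJAB : (tmulSpan F (IA : Set A) (IB : Set B) : Set (A ⊗[F] B)) ⊆ J)
    (hJ : ¬(J : Set (A ⊗[F] B)) ⊆ LinearMap.ker (qB.toLinearMap.lTensor A)) :
    (tmulSpan F (IA : Set A) (Set.univ : Set B) : Set (A ⊗[F] B)) ⊆ J := by
  let Φ := Algebra.TensorProduct.map (AlgHom.id F A) qB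
  have hΦ : Function.Surjective Φ :=
    Algebra.TensorProduct.map_surjective _ _ Function.surjective_id hqB
  have hker : LinearMap.ker Φ.toLinearMap = tmulSpan F Set.univ (IB : Set B) := by
    rw [show Φ.toLinearMap = qB.toLinearMap.lTensor A from rfl, ker_lTensor_eq_tmulSpan]
    exact congrArg _ (Set.ext hkerB)
  obtain ⟨a, b, hab, hab0⟩ := h3 (J.map Φ.toRingHom) (TwoSidedIdeal.map_ne_bot_of_not_le_ker
    fun h => hJ fun x hx => (TwoSidedIdeal.mem_ker Φ.toRingHom).1 (h hx))
  have ha1 : a ⊗ₜ 1 ∈ J.map Φ.toRingHom :=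
    tmul_one_mem_of_tmul_mem hab fun hb => hab0 (by simp [hb])
  have hsq : ∀ x' ∈ IA, ∀ x ∈ IA, (x' * x) ⊗ₜ[F] (1 : B) ∈ J := by
    intro x' hx' x hx
    obtain ⟨j, hj, hjx⟩ := (TwoSidedIdeal.mem_map_iff_of_surjective hΦ).1
      (hA.tmul_mem_of_tmul_mem_left ha1 (fun ha => hab0 (by simp [ha])) hx)
    replace hjx : Φ j = x ⊗ₜ 1 := hjx
    have hd : x ⊗ₜ 1 - j ∈ tmulSpan F Set.univ (IB : Set B) :=
      hker ▸ show Φ (x ⊗ₜ 1 - j) = 0 by simp [Φ, hjx]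
    have := J.add_mem (J.mul_mem_left (x' ⊗ₜ 1) j hj) (tmul_one_mul_mem hJAB hx' hd)
    rwa [← mul_add, add_sub_cancel, Algebra.TensorProduct.tmul_mul_tmul, one_mul] at this
  obtain ⟨x₁, hx₁, x₂, hx₂, h₁₂⟩ := hA.2.2.2
  refine coe_tmulSpan_subset_iff.2 fun x hx y _ => ?_
  simpa using J.mul_mem_right _ (1 ⊗ₜ y)
    (hA.tmul_mem_of_tmul_mem_left (hsq x₁ hx₁ x₂ hx₂) h₁₂ hx)

lemma coe_tmulSpan_univ_ideal_subset (hB : IsNearlySimpleWith IB) [IsSimpleRing A']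
    {qA : A →ₐ[F] A'} (hqA : Function.Surjective qA) (hkerA : ∀ x, qA x = 0 ↔ x ∈ IA)
    (h2 : ∀ K : TwoSidedIdeal (A' ⊗[F] B), K ≠ ⊥ →
      ∃ (a : A') (b : B), a ⊗ₜ[F] b ∈ K ∧ a ⊗ₜ[F] b ≠ 0)
    (hJAB : (tmulSpan F (IA : Set A) (IB : Set B) : Set (A ⊗[F] B)) ⊆ J)
    (hJ : ¬(J : Set (A ⊗[F] B)) ⊆ LinearMap.ker (qA.toLinearMap.rTensor B)) :
    (tmulSpan F (Set.univ : Set A) (IB : Set B) : Set (A ⊗[F] B)) ⊆ J := by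
  let Φ := Algebra.TensorProduct.map qA (AlgHom.id F B)
  have hΦ : Function.Surjective Φ :=
    Algebra.TensorProduct.map_surjective _ _ hqA Function.surjective_id
  have hker : LinearMap.ker Φ.toLinearMap = tmulSpan F (IA : Set A) Set.univ := by
    rw [show Φ.toLinearMap = qA.toLinearMap.rTensor B from rfl, ker_rTensor_eq_tmulSpan]
    exact congrArg (tmulSpan F · _) (Set.ext hkerA)
  obtain ⟨a, b, hab, hab0⟩ := h2 (J.map Φ.toRingHom) (TwoSidedIdeal.map_ne_bot_of_not_le_ker
    fun h => hJ fun x hx => (TwoSidedIdeal.mem_ker Φ.toRingHom).1 (h hx))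
  have h1b : 1 ⊗ₜ b ∈ J.map Φ.toRingHom :=
    one_tmul_mem_of_tmul_mem hab fun ha => hab0 (by simp [ha])
  have hsq : ∀ y' ∈ IB, ∀ y ∈ IB, (1 : A) ⊗ₜ[F] (y' * y) ∈ J := by
    intro y' hy' y hy
    obtain ⟨j, hj, hjy⟩ := (TwoSidedIdeal.mem_map_iff_of_surjective hΦ).1
      (hB.tmul_mem_of_tmul_mem_right h1b (fun hb => hab0 (by simp [hb])) hy)
    replace hjy : Φ j = 1 ⊗ₜ y := hjy
    have hd : 1 ⊗ₜ y - j ∈ tmulSpan F (IA : Set A) Set.univ :=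
      hker ▸ show Φ (1 ⊗ₜ y - j) = 0 by simp [Φ, hjy]
    have := J.add_mem (J.mul_mem_left (1 ⊗ₜ y') j hj) (one_tmul_mul_mem hJAB hy' hd)
    rwa [← mul_add, add_sub_cancel, Algebra.TensorProduct.tmul_mul_tmul, one_mul] at this
  obtain ⟨y₁, hy₁, y₂, hy₂, h₁₂⟩ := hB.2.2.2
  refine coe_tmulSpan_subset_iff.2 fun x _ y hy => ?_
  simpa using J.mul_mem_left (x ⊗ₜ 1) _
    (hB.tmul_mem_of_tmul_mem_right (hsq y₁ hy₁ y₂ hy₂) h₁₂ hy)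

lemma coe_eq_tmulSpan_sup_or_eq_top [IsSimpleRing (A' ⊗[F] B')] {qA : A →ₐ[F] A'}
    {qB : B →ₐ[F] B'} (hqA : Function.Surjective qA) (hkerA : ∀ x, qA x = 0 ↔ x ∈ IA)
    (hqB : Function.Surjective qB) (hkerB : ∀ y, qB y = 0 ↔ y ∈ IB)
    (hJ : tmulSpan F (IA : Set A) Set.univ ⊔ tmulSpan F Set.univ (IB : Set B) ≤
      J.asIdeal.restrictScalars F) :
    (J : Set (A ⊗[F] B)) =
      ↑(tmulSpan F (IA : Set A) Set.univ ⊔ tmulSpan F Set.univ (IB : Set B)) ∨ J = ⊤ := by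
  have hker := ker_map_eq_tmulSpan_sup (f := qA.toLinearMap) (g := qB.toLinearMap) hqA hqB
  rw [show (LinearMap.ker qA.toLinearMap : Set A) = IA from Set.ext hkerA,
    show (LinearMap.ker qB.toLinearMap : Set B) = IB from Set.ext hkerB] at hker
  let Φ := (Algebra.TensorProduct.map qA qB).toRingHom
  refine (TwoSidedIdeal.eq_ker_or_eq_top_of_ker_le (f := Φ)
    (Algebra.TensorProduct.map_surjective _ _ hqA hqB)
    (fun x hx => hJ (hker ▸ (TwoSidedIdeal.mem_ker Φ).1 hx))).imp_left fun h => ?_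
  rw [h, ← hker]
  exact Set.ext fun x => TwoSidedIdeal.mem_ker Φ

end NearlySimple

/-- Let `A`, `B` be nearly simple algebras over `F` with unique non-trivial ideals
`I_A`, `I_B`, and let `A' = A/I_A`, `B' = B/I_B` be their simple quotients (presented
abstractly by surjective algebra homomorphisms with kernels `I_A`, `I_B`). Assume that
every nonzero two-sided ideal of each of `A ⊗ B`, `(A/I_A) ⊗ B` and `A ⊗ (B/I_B)`
contains a nonzero elementary tensor, and that `Z(A/I_A) ⊗ Z(B/I_B)` is a field. Then
every two-sided ideal of `A ⊗[F] B` is admissible. -/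
theorem all_ideals_admissible_of_elementary_tensors_and_center_field
    (F A B A' B' : Type*) [Field F] [Ring A] [Algebra F A] [Ring B] [Algebra F B]
    [Ring A'] [Algebra F A'] [Ring B'] [Algebra F B']
    (IA : TwoSidedIdeal A) (IB : TwoSidedIdeal B)
    (hA : IsNearlySimpleWith IA) (hB : IsNearlySimpleWith IB)
    (qA : A →ₐ[F] A') (hqAsurj : Function.Surjective qA)
    (hkerA : ∀ x : A, qA x = 0 ↔ x ∈ IA)
    (qB : B →ₐ[F] B') (hqBsurj : Function.Surjective qB)
    (hkerB : ∀ y : B, qB y = 0 ↔ y ∈ IB)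
    (h1 : ∀ K : TwoSidedIdeal (A ⊗[F] B), K ≠ ⊥ →
      ∃ (a : A) (b : B), a ⊗ₜ[F] b ∈ K ∧ a ⊗ₜ[F] b ≠ 0)
    (h2 : ∀ K : TwoSidedIdeal (A' ⊗[F] B), K ≠ ⊥ →
      ∃ (a : A') (b : B), a ⊗ₜ[F] b ∈ K ∧ a ⊗ₜ[F] b ≠ 0)
    (h3 : ∀ K : TwoSidedIdeal (A ⊗[F] B'), K ≠ ⊥ →
      ∃ (a : A) (b : B'), a ⊗ₜ[F] b ∈ K ∧ a ⊗ₜ[F] b ≠ 0)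
    (h4 : IsField ((Subalgebra.center F A') ⊗[F] (Subalgebra.center F B'))) :
    ∀ J : TwoSidedIdeal (A ⊗[F] B), Admissible F IA IB J := by
  intro J
  have : IsSimpleRing A' := hA.isSimpleRing_of_surjective (f := qA.toRingHom) hqAsurj hkerA
  have : IsSimpleRing B' := hB.isSimpleRing_of_surjective (f := qB.toRingHom) hqBsurj hkerB
  have hIA : (LinearMap.ker qA.toLinearMap : Set A) = IA := Set.ext hkerA
  have hIB : (LinearMap.ker qB.toLinearMap : Set B) = IB := Set.ext hkerB
  rcases eq_or_ne J ⊥ with rfl | hJ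
  · exact Or.inl rfl
  obtain ⟨a, b, hab, hab0⟩ := h1 J hJ
  have hJAB := coe_tmulSpan_subset_of_tmul_mem (F := F) hA hB hab hab0
  by_cases hJA : (J : Set (A ⊗[F] B)) ⊆ LinearMap.ker (qA.toLinearMap.rTensor B) <;>
    by_cases hJB : (J : Set (A ⊗[F] B)) ⊆ LinearMap.ker (qB.toLinearMap.lTensor A)
  · have hJ' : (J : Set (A ⊗[F] B)) ⊆ ↑(LinearMap.ker (qA.toLinearMap.rTensor B) ⊓
        LinearMap.ker (qB.toLinearMap.lTensor A)) := Set.subset_inter hJA hJB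
    rw [ker_rTensor_inf_ker_lTensor_eq_tmulSpan, hIA, hIB] at hJ'
    exact Or.inr <| Or.inr <| Or.inl <| hJ'.antisymm hJAB
  · rw [ker_rTensor_eq_tmulSpan, hIA] at hJA
    exact Or.inr <| Or.inr <| Or.inr <| Or.inl <|
      hJA.antisymm (coe_tmulSpan_ideal_univ_subset hA hqBsurj hkerB h3 hJAB hJB)
  · rw [ker_lTensor_eq_tmulSpan, hIB] at hJB
    exact Or.inr <| Or.inr <| Or.inr <| Or.inr <| Or.inl <|
      hJB.antisymm (coe_tmulSpan_univ_ideal_subset hB hqAsurj hkerA h2 hJAB hJA)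
  · have : IsSimpleRing (A' ⊗[F] B') := isSimpleRing_tensorProduct h4
    rcases coe_eq_tmulSpan_sup_or_eq_top hqAsurj hkerA hqBsurj hkerB
      (sup_le (coe_tmulSpan_ideal_univ_subset hA hqBsurj hkerB h3 hJAB hJB)
        (coe_tmulSpan_univ_ideal_subset hB hqAsurj hkerA h2 hJAB hJA)) with h | h
    · exact Or.inr <| Or.inr <| Or.inr <| Or.inr <| Or.inr h
    · exact Or.inr (Or.inl h)
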